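/- arXiv:math/0403106 — 3 statements merged into one kernel-verified Lean document; each statement's English description precedes it below -/
import Mathlib

section
/- Let n be a positive integer and let g be an odd integer such that g is not congruent to 1 modulo 2^n and g is not congruent to -1 modulo 2^n. Then the multiplicative order of g modulo 2^{n+1} equals twice the multiplicative order of g modulo 2^n, i.e., ω_g(2^{n+1}) = 2·ω_g(2^n). -/
/-- The multiplicative order of `g` modulo `2^n`: the least positive integer `k`
such that `g ^ k ≡ 1 (mod 2^n)`. -/
noncomputable def multOrd (g : ℤ) (n : ℕ) : ℕ :=
  sInf {k : ℕ | 0 < k ∧ g ^ k ≡ 1 [ZMOD (2 ^ n : ℤ)]}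

lemma castPowEq (g : ℤ) (m k : ℕ) :
    ((g : ZMod (2 ^ m)) ^ k = 1) ↔ g ^ k ≡ 1 [ZMOD (2 ^ m : ℤ)] := by
  have h1 : ((g : ZMod (2 ^ m)) ^ k) = (((g ^ k : ℤ) : ZMod (2 ^ m))) := by push_cast; ring
  have h2 : (1 : ZMod (2 ^ m)) = (((1 : ℤ) : ZMod (2 ^ m))) := by push_cast; ring
  rw [h1, h2, ZMod.intCast_eq_intCast_iff]
  norm_num

/-- Euler-type lemma: for odd `g`, `g^(2^m) ≡ 1 [ZMOD 2^(m+1)]`. -/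
lemma oddPowTwoPow (g : ℤ) (hg : Odd g) : ∀ m : ℕ, g ^ (2 ^ m) ≡ 1 [ZMOD (2 ^ (m + 1) : ℤ)] := by
  intro m
  induction m with
  | zero =>
    obtain ⟨k, hk⟩ := hg
    rw [Int.modEq_iff_dvd]
    exact ⟨-k, by rw [hk]; ring⟩
  | succ m ih =>
    rw [Int.modEq_iff_dvd] at ih ⊢
    obtain ⟨c, hc⟩ := ih
    obtain ⟨u, hu⟩ := (hg.pow : Odd (g ^ (2 ^ m)))
    refine ⟨c * (u + 1), ?_⟩
    have hsq : g ^ (2 ^ (m + 1)) = (g ^ (2 ^ m)) ^ 2 := by rw [pow_succ, pow_mul]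
    rw [hsq]
    linear_combination (1 + g ^ (2 ^ m)) * hc + (2 ^ (m + 1) * c) * hu

lemma multOrd_eq (g : ℤ) (hg : Odd g) (m : ℕ) :
    multOrd g m = orderOf ((g : ZMod (2 ^ m))) := by
  have key : ((g : ZMod (2 ^ m)) ^ (2 ^ m) = 1) := by
    rw [castPowEq]
    exact (oddPowTwoPow g hg m).of_dvd ⟨2, by ring⟩
  have hfin : IsOfFinOrder ((g : ZMod (2 ^ m))) :=
    isOfFinOrder_iff_pow_eq_one.mpr ⟨2 ^ m, pow_pos two_pos m, key⟩
  have hne : {k : ℕ | 0 < k ∧ g ^ k ≡ 1 [ZMOD (2 ^ m : ℤ)]}.Nonempty :=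
    ⟨2 ^ m, pow_pos two_pos m, (castPowEq g m _).mp key⟩
  apply le_antisymm
  · exact Nat.sInf_le ⟨hfin.orderOf_pos, (castPowEq g m _).mp (pow_orderOf_eq_one _)⟩
  · obtain ⟨hpos, hmem⟩ := Nat.sInf_mem hne
    exact orderOf_le_of_pow_eq_one hpos ((castPowEq g m _).mpr hmem)

theorem order_doubles (n : ℕ) (hn : 0 < n) (g : ℤ) (hg : Odd g)
    (h1 : ¬ g ≡ 1 [ZMOD (2 ^ n : ℤ)]) (h2 : ¬ g ≡ -1 [ZMOD (2 ^ n : ℤ)]) :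
    multOrd g (n + 1) = 2 * multOrd g n := by
  obtain ⟨w, hw⟩ := hg
  have hg : Odd g := ⟨w, hw⟩
  -- n ≥ 3
  have hn3 : 3 ≤ n := by
    by_contra hh
    push_neg at hh
    interval_cases n
    · exact h1 (Int.modEq_iff_dvd.mpr ⟨-w, by rw [hw]; ring⟩)
    · rw [Int.modEq_iff_dvd] at h1 h2
      rw [hw] at h1 h2
      norm_num at h1 h2
      omega
  rw [multOrd_eq g hg, multOrd_eq g hg]
  set x : ZMod (2 ^ (n + 1)) := ((g : ℤ) : ZMod (2 ^ (n + 1))) with hx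
  set y : ZMod (2 ^ n) := ((g : ℤ) : ZMod (2 ^ n)) with hy
  set d := orderOf y with hdd'
  set D := orderOf x with hDD'
  have hdvd21 : (2 ^ n : ℤ) ∣ (2 ^ (n + 1) : ℤ) := ⟨2, by ring⟩
  -- d ∣ D
  have hdD : d ∣ D := by
    apply orderOf_dvd_of_pow_eq_one
    rw [hy, castPowEq]
    exact ((castPowEq g (n + 1) D).mp (pow_orderOf_eq_one x)).of_dvd hdvd21
  -- g^d ≡ 1 mod 2^n
  have hgd : g ^ d ≡ 1 [ZMOD (2 ^ n : ℤ)] := (castPowEq g n d).mp (pow_orderOf_eq_one y)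
  -- D ∣ 2d
  have hD2d : D ∣ 2 * d := by
    apply orderOf_dvd_of_pow_eq_one
    rw [hx, castPowEq, Int.modEq_iff_dvd]
    obtain ⟨c, hc⟩ := Int.modEq_iff_dvd.mp hgd
    obtain ⟨u, hu⟩ := (hg.pow : Odd (g ^ d))
    refine ⟨c * (u + 1), ?_⟩
    have hsq : g ^ (2 * d) = (g ^ d) ^ 2 := by rw [mul_comm, pow_mul]
    rw [hsq]
    linear_combination (1 + g ^ d) * hc + (2 ^ n * c) * hu
  -- d positive
  have hdpos : 0 < d := by
    rw [hdd']
    apply IsOfFinOrder.orderOf_pos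
    apply isOfFinOrder_iff_pow_eq_one.mpr
    refine ⟨2 ^ n, pow_pos two_pos n, ?_⟩
    rw [hy, castPowEq]
    exact (oddPowTwoPow g hg n).of_dvd ⟨2, by ring⟩
  -- D ≠ d, i.e., g^d ≢ 1 mod 2^(n+1)
  have hkey : ¬ (g ^ d ≡ 1 [ZMOD (2 ^ (n + 1) : ℤ)]) := by
    intro hcon
    have hdvd : d ∣ 2 ^ (n - 1) := by
      apply orderOf_dvd_of_pow_eq_one
      rw [hy, castPowEq]
      have := oddPowTwoPow g hg (n - 1)
      rwa [Nat.sub_add_cancel hn] at this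
    obtain ⟨j, hjle, hjeq⟩ := (Nat.dvd_prime_pow Nat.prime_two).mp hdvd
    have hd1 : d ≠ 1 := by
      intro hd1
      apply h1
      have := hgd
      rwa [hd1, pow_one] at this
    have hj1 : 1 ≤ j := by
      rcases Nat.eq_zero_or_pos j with h | h
      · exact absurd (by rw [hjeq, h, pow_zero]) hd1
      · exact h
    set e := 2 ^ (j - 1) with he
    have hde : d = 2 * e := by
      rw [hjeq, he, ← pow_succ']
      congr 1
      omega
    have helt : e < d := by omega
    have hepos : 0 < e := pow_pos two_pos _
    have hge1 : ¬ (g ^ e ≡ 1 [ZMOD (2 ^ n : ℤ)]) := by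
      intro hcontra
      have : d ≤ e := orderOf_le_of_pow_eq_one hepos ((castPowEq g n e).mpr hcontra)
      omega
    have hsq : (g ^ e - 1) * (g ^ e + 1) = -((2 : ℤ) ^ (n + 1)) * (Int.modEq_iff_dvd.mp hcon).choose := by
      have hc := (Int.modEq_iff_dvd.mp hcon).choose_spec
      have hh2 : (g ^ e) ^ 2 = g ^ d := by rw [← pow_mul]; congr 1; omega
      linear_combination hh2 - hc
    set c : ℤ := (Int.modEq_iff_dvd.mp hcon).choose with hcdef
    obtain ⟨k, hk⟩ := (hg.pow : Odd (g ^ e))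
    -- g^e ≡ -1 mod 2^n
    have hneg : (2 ^ n : ℤ) ∣ g ^ e + 1 := by
      rcases Int.even_or_odd k with ⟨m, hm⟩ | ⟨m, hm⟩
      · -- k even: get 2^n ∣ g^e - 1, contradiction with hge1
        exfalso
        apply hge1
        rw [Int.modEq_iff_dvd, dvd_sub_comm]
        have hnd : ¬ (2:ℤ) ∣ (k + 1) := by omega
        apply Int.prime_two.pow_dvd_of_dvd_mul_right n hnd
        refine ⟨-c, ?_⟩
        have hdoub : (2 : ℤ) * ((g ^ e - 1) * (k + 1)) = 2 * (2 ^ n * -c) := by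
          linear_combination hsq + (1 - g ^ e) * hk
        exact mul_left_cancel₀ (by norm_num : (2:ℤ) ≠ 0) hdoub
      · -- k odd
        have hnd : ¬ (2:ℤ) ∣ k := by omega
        apply Int.prime_two.pow_dvd_of_dvd_mul_right n hnd
        refine ⟨-c, ?_⟩
        have hdoub : (2 : ℤ) * ((g ^ e + 1) * k) = 2 * (2 ^ n * -c) := by
          linear_combination hsq - (g ^ e + 1) * hk
        exact mul_left_cancel₀ (by norm_num : (2:ℤ) ≠ 0) hdoub
    rcases Nat.lt_or_ge j 2 with hj | hj
    · -- j = 1, e = 1, h = g: contradicts h2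
      have hje : j = 1 := by omega
      have he1 : e = 1 := by rw [he, hje]; norm_num
      apply h2
      rw [Int.modEq_iff_dvd]
      obtain ⟨c', hc'⟩ := hneg
      rw [he1, pow_one] at hc'
      exact ⟨-c', by linear_combination -hc'⟩
    · -- j ≥ 2: h is square of an odd number, so h ≡ 1 mod 8; but h ≡ -1 mod 8
      obtain ⟨f, hf⟩ : ∃ f, e = 2 * f := ⟨2 ^ (j - 2), by rw [he, ← pow_succ']; congr 1; omega⟩
      have hhsq : g ^ e = (g ^ f) ^ 2 := by rw [hf, mul_comm, pow_mul]
      obtain ⟨m, hm⟩ := (hg.pow : Odd (g ^ f))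
      have h8 : (8 : ℤ) ∣ g ^ e - 1 := by
        rw [hhsq, hm]
        obtain ⟨t, ht⟩ := Int.even_mul_succ_self m
        exact ⟨t, by linear_combination 4 * ht⟩
      have h8n : (8 : ℤ) ∣ (2 : ℤ) ^ n :=
        ⟨2 ^ (n - 3), by rw [show (8:ℤ) = 2 ^ 3 by norm_num, ← pow_add]; congr 1; omega⟩
      have h82 : (8 : ℤ) ∣ g ^ e + 1 := h8n.trans hneg
      omega
  -- conclude
  have hDd : D ≠ d := by
    intro hEq
    apply hkey
    rw [← hEq]
    exact (castPowEq g (n + 1) D).mp (pow_orderOf_eq_one x)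
  obtain ⟨k, hk⟩ := hdD
  have hk2 : k ∣ 2 := by
    have hmm : d * k ∣ d * 2 := by rw [← hk, mul_comm d 2]; exact hD2d
    exact (mul_dvd_mul_iff_left (by omega : d ≠ 0)).mp hmm
  rcases (Nat.prime_two.eq_one_or_self_of_dvd k hk2) with rfl | rfl
  · omega
  · omega
end

section
/- Let g be an odd integer with g ∉ {-1, 1} and let w be a non-zero integer. Then for every integer n with n ≥ d(w) + max{3, c(g)}, the exponential sum ∑_{k=1}^{ω_g(2^n)} e^{2πi·w·g^k / 2^n} equals 0. -/
open Complex

/-- `d w` is the greatest exponent `k` such that `2^k ∣ w` (the 2-adic valuation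
of the nonzero integer `w`). -/
noncomputable def dval (w : ℤ) : ℕ := padicValInt 2 w

/-- For an odd integer `g ∉ {-1, 1}`, `cval g` is the least positive integer `k`
with `g < 2^(k-1) - 1` when `g > 1`, and the least positive integer `k` with
`g > -2^(k-1) - 1` when `g < -1`. -/
noncomputable def cval (g : ℤ) : ℕ :=
  if 1 < g then sInf {k : ℕ | 0 < k ∧ g < 2 ^ (k - 1) - 1}
  else sInf {k : ℕ | 0 < k ∧ -2 ^ (k - 1) - 1 < g}

/-!
Write `w = 2 ^ d * w'` with `w'` odd and `n = d + M + 1`. Both branches of the definition of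
`c(g)` say `|g + 1| < 2 ^ M`, and this forces some power `g ^ j` to satisfy
`g ^ j - 1 = 2 ^ M * (odd)`: for `x ≡ 1 (mod 4)` one has `v₂(x ^ 2 ^ i - 1) = v₂(x - 1) + i`,
applied to `x = g` or `x = -g`, and the bound on `|g + 1|` keeps `v₂(x - 1)` at most `M`.
Hence `k ↦ exp (2πi w g^k / 2^n)` has period `ω_g(2^n)` and changes sign under `k ↦ k + j`, so
its sum over a period equals its own negative.
-/

open Finset Function Real

theorem Function.Periodic.sum_Ico_add_eq_sum_range {M : Type*} [AddCommMonoid M] {f : ℕ → M}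
    {m : ℕ} (hf : Periodic f m) (a : ℕ) :
    ∑ k ∈ Ico a (a + m), f k = ∑ k ∈ range m, f k := by
  rw [Finset.sum, Finset.sum, range_val, ← Nat.multiset_Ico_map_mod a m, Multiset.map_map]
  exact congr_arg Multiset.sum (Multiset.map_congr rfl fun k _ => (hf.map_mod_nat k).symm)

theorem Function.Antiperiodic.sum_range_eq_zero {R : Type*} [NonAssocRing R] [NoZeroDivisors R]
    [CharZero R] {f : ℕ → R} {m j : ℕ} (ha : Antiperiodic f j) (hf : Periodic f m) :
    ∑ k ∈ range m, f k = 0 := by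
  refine CharZero.eq_neg_self_iff.1 ?_
  calc ∑ k ∈ range m, f k = ∑ k ∈ Ico j (j + m), f k := (hf.sum_Ico_add_eq_sum_range j).symm
    _ = ∑ k ∈ range m, f (j + k) := by rw [sum_Ico_eq_sum_range, add_tsub_cancel_left]
    _ = -∑ k ∈ range m, f k := by
      rw [← sum_neg_distrib]
      exact sum_congr rfl fun k _ => by rw [add_comm, ha]

theorem Complex.antiperiodic_exp_two_pi_I_mul_div {q : ℂ} (hq : q ≠ 0) :
    Antiperiodic (fun x => exp (2 * π * I * x / (2 * q))) q := fun x => by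
  rw [← exp_antiperiodic]
  field_simp

theorem sum_Icc_exp_two_pi_I_mul_div_eq_zero {a : ℕ → ℤ} {q : ℤ} {m j : ℕ} (hq : q ≠ 0)
    (hper : ∀ k, 2 * q ∣ a (k + m) - a k)
    (hanti : ∀ k, ∃ o, Odd o ∧ a (k + j) - a k = q * o) :
    ∑ k ∈ Icc 1 m, exp (2 * π * I * a k / (2 * q)) = 0 := by
  have hφ := antiperiodic_exp_two_pi_I_mul_div (Int.cast_ne_zero.2 hq)
  have hf_per : Periodic (fun k => exp (2 * π * I * a k / (2 * q))) m := fun k => by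
    obtain ⟨c, hc⟩ := hper k
    have : (a (k + m) : ℂ) = a k + c * (2 * q) := by
      exact_mod_cast (by linear_combination hc : a (k + m) = a k + c * (2 * q))
    simpa only [this] using hφ.periodic_two_mul.int_mul c (a k)
  have hf_anti : Antiperiodic (fun k => exp (2 * π * I * a k / (2 * q))) j := fun k => by
    obtain ⟨_, ⟨r, rfl⟩, hao⟩ := hanti k
    have : (a (k + j) : ℂ) = a k + (r * (2 * q) + q) := by
      exact_mod_cast (by linear_combination hao : a (k + j) = a k + (r * (2 * q) + q))
    simpa only [this] using hφ.int_odd_mul_antiperiodic r (a k)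
  rw [← Ico_add_one_right_eq_Icc, add_comm m 1, hf_per.sum_Ico_add_eq_sum_range]
  exact hf_anti.sum_range_eq_zero hf_per

theorem exists_odd_eq_two_pow_dval_mul {y : ℤ} (hy : y ≠ 0) :
    ∃ u, Odd u ∧ y = 2 ^ dval y * u := by
  obtain ⟨u, hu⟩ : (2 : ℤ) ^ dval y ∣ y := by exact_mod_cast padicValInt_dvd (p := 2) y
  refine ⟨u, Int.not_even_iff_odd.1 fun ⟨r, hr⟩ => ?_, hu⟩
  have : (2 : ℤ) ^ (dval y + 1) ∣ y :=
    ⟨r, by rw [pow_succ]; linear_combination hu + 2 ^ dval y * hr⟩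
  have := ((padicValInt_dvd_iff (p := 2) _ y).1 (by exact_mod_cast this)).resolve_left hy
  exact (dval y).lt_irrefl this

theorem dval_lt_of_abs_lt {y : ℤ} {K : ℕ} (hy : y ≠ 0) (h : |y| < 2 ^ K) : dval y < K := by
  have hle : (2 : ℤ) ^ dval y ≤ |y| :=
    Int.le_of_dvd (abs_pos.2 hy) ((dvd_abs _ _).2 (by exact_mod_cast padicValInt_dvd (p := 2) y))
  exact (pow_lt_pow_iff_right₀ one_lt_two).1 (hle.trans_lt h)

theorem exists_odd_pow_two_pow_sub_one_eq {x : ℤ} (h4 : 4 ∣ x - 1) (hx : x ≠ 1) (i : ℕ) :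
    ∃ v, Odd v ∧ x ^ 2 ^ i - 1 = 2 ^ (dval (x - 1) + i) * v := by
  have hx0 : x - 1 ≠ 0 := sub_ne_zero.2 hx
  have ht : 2 ≤ dval (x - 1) :=
    ((padicValInt_dvd_iff (p := 2) 2 _).1 (by norm_num [h4])).resolve_left hx0
  induction i with
  | zero => simpa using exists_odd_eq_two_pow_dval_mul hx0
  | succ i ih =>
    obtain ⟨v, hv, hxv⟩ := ih
    obtain ⟨s, hs⟩ : ∃ s, dval (x - 1) + i = s + 1 := ⟨dval (x - 1) + i - 1, by omega⟩
    have hsv : Odd (1 + 2 ^ s * v) :=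
      ((Int.even_pow.2 ⟨even_two, by omega⟩).mul_right v).one_add
    refine ⟨v * (1 + 2 ^ s * v), hv.mul hsv, ?_⟩
    rw [hs] at hxv
    rw [pow_succ, pow_mul, ← add_assoc, hs]
    linear_combination (x ^ 2 ^ i + 1 + 2 ^ (s + 1) * v) * hxv

theorem exists_pow_sub_one_eq_two_pow_mul_odd {g : ℤ} (hg : Odd g) (hg1 : g ≠ 1)
    (hgm1 : g ≠ -1) {M : ℕ} (hM : |g + 1| < 2 ^ M) :
    ∃ j u, Odd u ∧ g ^ j - 1 = 2 ^ M * u := by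
  have h4 : 4 ∣ g - 1 ∨ 4 ∣ -g - 1 := by rcases hg with ⟨r, rfl⟩; omega
  rcases h4 with h4 | h4
  · have hM0 : M ≠ 0 := by
      rintro rfl
      exact hgm1 (eq_neg_of_add_eq_zero_left (Int.abs_lt_one_iff.1 (by simpa using hM)))
    have hgM : |g - 1| < 2 ^ (M + 1) := by
      have : (2 : ℤ) ≤ 2 ^ M := le_self_pow₀ one_le_two hM0
      calc |g - 1| = |g + 1 - 2| := by ring_nf
        _ ≤ |g + 1| + |2| := abs_sub _ _
        _ < 2 ^ (M + 1) := by rw [pow_succ, abs_two]; linarith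
    have ht := dval_lt_of_abs_lt (sub_ne_zero.2 hg1) hgM
    obtain ⟨v, hv, hgv⟩ := exists_odd_pow_two_pow_sub_one_eq h4 hg1 (M - dval (g - 1))
    exact ⟨_, v, hv, by rwa [Nat.add_sub_cancel' (by omega)] at hgv⟩
  · have hgM : |-g - 1| < 2 ^ M := by rwa [show -g - 1 = -(g + 1) by ring, abs_neg]
    have ht := dval_lt_of_abs_lt (by omega) hgM
    obtain ⟨v, hv, hgv⟩ := exists_odd_pow_two_pow_sub_one_eq h4 (by omega) (M - dval (-g - 1))
    refine ⟨2 ^ (M - dval (-g - 1)), v, hv, ?_⟩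
    rwa [Nat.add_sub_cancel' ht.le, (Nat.even_pow.2 ⟨even_two, by omega⟩).neg_pow] at hgv

theorem lt_two_pow_pred_of_sInf_le {b : ℤ} {N : ℕ}
    (h : sInf {k : ℕ | 0 < k ∧ b < 2 ^ (k - 1)} ≤ N) : b < 2 ^ (N - 1) := by
  obtain ⟨e, he⟩ := pow_unbounded_of_one_lt b one_lt_two
  obtain ⟨-, hb⟩ :=
    Nat.sInf_mem (s := {k : ℕ | 0 < k ∧ b < 2 ^ (k - 1)}) ⟨e + 1, by simpa⟩
  exact hb.trans_le (pow_le_pow_right₀ one_le_two (by omega))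

theorem abs_add_one_lt_two_pow_of_cval_le {g : ℤ} {M : ℕ} (hM : 2 ≤ M)
    (h : cval g ≤ M + 1) : |g + 1| < 2 ^ M := by
  have h4 : (4 : ℤ) ≤ 2 ^ M := by
    calc (4 : ℤ) = 2 ^ 2 := by norm_num
      _ ≤ 2 ^ M := pow_le_pow_right₀ one_le_two hM
  rw [cval] at h
  split_ifs at h with hg
  · have := lt_two_pow_pred_of_sInf_le (b := g + 1) (by simpa only [lt_sub_iff_add_lt] using h)
    simp only [Nat.add_sub_cancel] at this
    exact abs_lt.2 ⟨by linarith, this⟩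
  · have := lt_two_pow_pred_of_sInf_le (b := -(g + 1))
      (by simpa only [neg_lt, sub_lt_iff_lt_add] using h)
    simp only [Nat.add_sub_cancel] at this
    exact abs_lt.2 ⟨by linarith, by linarith⟩

theorem pow_multOrd_modEq_one (g : ℤ) (n : ℕ) : g ^ multOrd g n ≡ 1 [ZMOD 2 ^ n] := by
  by_cases hne : {k : ℕ | 0 < k ∧ g ^ k ≡ 1 [ZMOD 2 ^ n]}.Nonempty
  · exact (Nat.sInf_mem hne).2
  · rw [multOrd, Set.not_nonempty_iff_eq_empty.1 hne, Nat.sInf_empty, pow_zero]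

theorem exp_sum_eq_zero (g : ℤ) (hg : Odd g) (hg1 : g ≠ 1) (hgm1 : g ≠ -1)
    (w : ℤ) (hw : w ≠ 0) (n : ℕ) (hn : dval w + max 3 (cval g) ≤ n) :
    ∑ k ∈ Finset.Icc 1 (multOrd g n),
      Complex.exp (2 * Real.pi * Complex.I * (w : ℂ) * (g : ℂ) ^ k / (2 : ℂ) ^ n) = 0 := by
  obtain ⟨w', hw', hww'⟩ := exists_odd_eq_two_pow_dval_mul hw
  obtain ⟨M, rfl⟩ : ∃ M, n = dval w + M + 1 := ⟨n - dval w - 1, by omega⟩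
  obtain ⟨j, u, hu, hgj⟩ := exists_pow_sub_one_eq_two_pow_mul_odd hg hg1 hgm1
    (abs_add_one_lt_two_pow_of_cval_le (M := M) (by omega) (by omega))
  have hper : ∀ k,
      2 * 2 ^ (dval w + M) ∣ w * g ^ (k + multOrd g (dval w + M + 1)) - w * g ^ k := fun k => by
    rw [← pow_succ']
    exact ((pow_multOrd_modEq_one g _).symm.dvd.mul_left (w * g ^ k)).trans
      (dvd_of_eq (by ring))
  have hanti : ∀ k, ∃ o, Odd o ∧ w * g ^ (k + j) - w * g ^ k = 2 ^ (dval w + M) * o :=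
    fun k => ⟨w' * g ^ k * u, (hw'.mul hg.pow).mul hu,
      by linear_combination (w * g ^ k) * hgj + 2 ^ M * u * g ^ k * hww'⟩
  convert sum_Icc_exp_two_pi_I_mul_div_eq_zero (a := fun k => w * g ^ k)
    (pow_ne_zero _ two_ne_zero) hper hanti using 3
  push_cast
  ring
end

section
/- Let m ≤ n be positive integers and let g be an odd integer such that g is not congruent to 1 modulo 2^m and g is not congruent to -1 modulo 2^m. Then ω_g(2^n) = 2^{n-m}·ω_g(2^m). -/
theorem multOrd_eq_orderOf (g : ℤ) (n : ℕ) : multOrd g n = orderOf (g : ZMod (2 ^ n)) := by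
  rw [orderOf, Function.minimalPeriod_eq_sInf_n_pos_IsPeriodicPt, multOrd]
  congr! 3 with k
  rw [isPeriodicPt_mul_iff_pow_eq_one, ← Int.cast_pow, ← Int.cast_one (R := ZMod _),
    ZMod.intCast_eq_intCast_iff, gt_iff_lt]
  push_cast
  rfl

theorem Int.cast_pow_eq_one_iff_dvd (g : ℤ) (n k : ℕ) :
    (g : ZMod n) ^ k = 1 ↔ (n : ℤ) ∣ g ^ k - 1 := by
  rw [← Int.cast_pow, ← Int.cast_one, ZMod.intCast_eq_intCast_iff_dvd_sub, dvd_sub_comm]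

theorem Int.two_pow_dvd_pow_two_pow_sub_one_iff {g : ℤ} (hg : Odd g)
    (hfin : FiniteMultiplicity 2 (g ^ 2 - 1)) (N k : ℕ) :
    2 ^ N ∣ g ^ 2 ^ (k + 1) - 1 ↔ N ≤ multiplicity 2 (g ^ 2 - 1) + k := by
  have hsplit : g ^ 2 ^ (k + 1) - 1 = (g ^ 2) ^ 2 ^ k - 1 ^ 2 ^ k := by ring
  have h4 : (4 : ℤ) ∣ g ^ 2 - 1 := dvd_trans (by norm_num) (Int.eight_dvd_sq_sub_one_of_odd hg)
  have hsq : ¬ 2 ∣ g ^ 2 := by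
    rw [← even_iff_two_dvd, Int.not_even_iff_odd]
    exact hg.pow
  rw [hsplit, pow_dvd_iff_le_emultiplicity, Int.two_pow_two_pow_sub_pow_two_pow k h4 hsq,
    hfin.emultiplicity_eq_multiplicity]
  norm_cast

theorem Int.modEq_one_or_modEq_neg_one_of_two_pow_succ_dvd_sq_sub_one {g : ℤ} (hg : Odd g)
    {N : ℕ} (h : 2 ^ (N + 1) ∣ g ^ 2 - 1) : g ≡ 1 [ZMOD 2 ^ N] ∨ g ≡ -1 [ZMOD 2 ^ N] := by
  simp only [Int.modEq_comm (a := g), Int.modEq_iff_dvd, sub_neg_eq_add]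
  obtain ⟨t, rfl⟩ := hg
  rcases Int.even_or_odd t with ⟨u, rfl⟩ | ⟨u, rfl⟩
  · left
    have h' : 2 ^ N ∣ (2 * (u + u)) * (2 * u + 1) := by
      rw [pow_succ', show (2 * (u + u) + 1) ^ 2 - 1 = 2 * ((2 * (u + u)) * (2 * u + 1)) by ring]
        at h
      exact (mul_dvd_mul_iff_left two_ne_zero).mp h
    simpa using Int.prime_two.pow_dvd_of_dvd_mul_right N (by omega) h'
  · right
    have h' : 2 ^ N ∣ (2 * u + 1) * (2 * (2 * u + 1) + 1 + 1) := by
      rw [pow_succ', show (2 * (2 * u + 1) + 1) ^ 2 - 1 =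
        2 * ((2 * u + 1) * (2 * (2 * u + 1) + 1 + 1)) by ring] at h
      exact (mul_dvd_mul_iff_left two_ne_zero).mp h
    exact Int.prime_two.pow_dvd_of_dvd_mul_left N (by omega) h'

theorem orderOf_intCast_zmod_two_pow {g : ℤ} (hg : Odd g)
    (hfin : FiniteMultiplicity 2 (g ^ 2 - 1)) {N : ℕ} (hN : multiplicity 2 (g ^ 2 - 1) ≤ N)
    (h1 : ¬ g ≡ 1 [ZMOD 2 ^ N]) :
    orderOf (g : ZMod (2 ^ N)) = 2 ^ (N + 1 - multiplicity 2 (g ^ 2 - 1)) := by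
  set s := multiplicity 2 (g ^ 2 - 1)
  have hpow (k : ℕ) : (g : ZMod (2 ^ N)) ^ 2 ^ (k + 1) = 1 ↔ N ≤ s + k := by
    rw [Int.cast_pow_eq_one_iff_dvd, Nat.cast_pow, Nat.cast_ofNat,
      Int.two_pow_dvd_pow_two_pow_sub_one_iff hg hfin]
  rcases hN.eq_or_lt with rfl | hlt
  · have hg1 : ¬ (g : ZMod (2 ^ s)) ^ 2 ^ 0 = 1 := by
      rwa [pow_zero, pow_one, ← Int.cast_one, ZMod.intCast_eq_intCast_iff, Nat.cast_pow,
        Nat.cast_ofNat]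
    rw [orderOf_eq_prime_pow hg1 ((hpow 0).2 le_self_add)]
    congr 1
    omega
  · obtain ⟨j, rfl⟩ : ∃ j, N = s + j + 1 := ⟨N - s - 1, by omega⟩
    rw [orderOf_eq_prime_pow (mt (hpow j).1 (by omega)) ((hpow (j + 1)).2 le_rfl)]
    congr 1
    omega

theorem order_power_relation_general (m n : ℕ) (hmn : m ≤ n) (g : ℤ) (hg : Odd g)
    (h1 : ¬ g ≡ 1 [ZMOD (2 ^ m : ℤ)]) (h2 : ¬ g ≡ -1 [ZMOD (2 ^ m : ℤ)]) :
    multOrd g n = 2 ^ (n - m) * multOrd g m := by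
  have hndvd : ¬ 2 ^ (m + 1) ∣ g ^ 2 - 1 := fun h =>
    (Int.modEq_one_or_modEq_neg_one_of_two_pow_succ_dvd_sq_sub_one hg h).elim h1 h2
  have hfin : FiniteMultiplicity 2 (g ^ 2 - 1) := ⟨m, hndvd⟩
  have hsm : multiplicity 2 (g ^ 2 - 1) ≤ m :=
    Nat.lt_succ_iff.mp (hfin.multiplicity_lt_iff_not_dvd.mpr hndvd)
  have h1n : ¬ g ≡ 1 [ZMOD 2 ^ n] := fun h => h1 (h.of_dvd (pow_dvd_pow 2 hmn))
  rw [multOrd_eq_orderOf, multOrd_eq_orderOf, orderOf_intCast_zmod_two_pow hg hfin hsm h1,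
    orderOf_intCast_zmod_two_pow hg hfin (hsm.trans hmn) h1n, ← pow_add]
  congr 1
  omega

theorem order_power_relation (m n : ℕ) (hm : 0 < m) (hmn : m ≤ n) (g : ℤ) (hg : Odd g)
    (h1 : ¬ g ≡ 1 [ZMOD (2 ^ m : ℤ)]) (h2 : ¬ g ≡ -1 [ZMOD (2 ^ m : ℤ)]) :
    multOrd g n = 2 ^ (n - m) * multOrd g m :=
  order_power_relation_general m n hmn g hg h1 h2
end
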